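/- Let n ≥ 1. In the Lie algebra gl(n+2, ℝ) of real (n+2)×(n+2) matrices with bracket [A,B] = AB − BA, define (rows and columns indexed 1, …, n+2): E₁ is the matrix with entry −1 in position (2, n+2), entry −(j−1) in position (j, j−1) for 3 ≤ j ≤ n+1, and all other entries 0; for 2 ≤ i ≤ n+1, Eᵢ is the matrix whose only nonzero entry is 1 in position (1, n+3−i); and E_{n+2} is the matrix whose only nonzero entry is 1 in position (1, n+2). Then E₁, …, E_{n+2} are linearly independent and satisfy [E₁, Eᵢ] = (n+2−i)·E_{i+1} for 2 ≤ i ≤ n+1 and [Eᵢ, Eⱼ] = 0 for all 2 ≤ i, j ≤ n+2; consequently their linear span is a Lie subalgebra of gl(n+2, ℝ) isomorphic to the elementary filiform Lie algebra f_{n+2}. -/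

import Mathlib

/-!
For `i ≥ 1` the matrix `E i` is a matrix unit in row `0`, so these commute pairwise, and `E 0`
has zero column `0`; hence `⁅E 0, single 0 k 1⁆ = -(single 0 k 1 * E 0)` is row `k` of `E 0`,
negated and moved to row `0`. The rows of `E 0` are chosen so that this reproduces the filiform
relations. Each `E i` has a nonzero pivot entry where all the others vanish, so they are linearly
independent. The linear map `f_{n+2} → gl(n+2, ℝ)` sending the basis `e` to `E` then respects
brackets of basis vectors, hence is an injective Lie algebra morphism onto the span of the `E i`.
-/

attribute [local instance 100] LieRing.ofAssociativeRing

namespace Module.Basis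

variable {ι R L M : Type*} [LinearOrder ι] [CommRing R] [LieRing L] [LieAlgebra R L]
  [LieRing M] [LieAlgebra R M] (b : Basis ι R L) {E : ι → M}

theorem constr_lie_of_lt (h : ∀ i j, i < j → b.constr R E ⁅b i, b j⁆ = ⁅E i, E j⁆)
    (x y : L) : b.constr R E ⁅x, y⁆ = ⁅b.constr R E x, b.constr R E y⁆ := by
  have hbilin :
      (LieModule.toEnd R L L : L →ₗ[R] Module.End R L).compr₂ (b.constr R E) =
        (LieModule.toEnd R M M : M →ₗ[R] Module.End R M).compl₁₂ (b.constr R E)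
          (b.constr R E) := by
    refine LinearMap.ext_basis b b fun i j => ?_
    simp only [LinearMap.compr₂_apply, LinearMap.compl₁₂_apply, LieHom.coe_toLinearMap,
      LieModule.toEnd_apply_apply, constr_basis]
    rcases lt_trichotomy i j with hij | rfl | hji
    · simpa only [constr_basis] using h i j hij
    · simp only [lie_self, map_zero]
    · rw [← lie_skew, map_neg, h j i hji, lie_skew]
  simpa using LinearMap.congr_fun₂ hbilin x y

noncomputable def constrLieHom
    (h : ∀ i j, i < j → b.constr R E ⁅b i, b j⁆ = ⁅E i, E j⁆) : L →ₗ⁅R⁆ M :=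
  { b.constr R E with map_lie' := b.constr_lie_of_lt h _ _ }

theorem exists_lieEquiv_lieSubalgebra_span (hE : LinearIndependent R E)
    (h : ∀ i j, i < j → b.constr R E ⁅b i, b j⁆ = ⁅E i, E j⁆) :
    ∃ S : LieSubalgebra R M, S.toSubmodule = Submodule.span R (Set.range E) ∧
      Nonempty (L ≃ₗ⁅R⁆ S) :=
  ⟨(b.constrLieHom h).range, (LieHom.range_toSubmodule _).trans (b.constr_range R),
    ⟨LieEquiv.ofInjective _ (b.injective_constr_of_linearIndependent hE)⟩⟩

end Module.Basis

namespace Matrix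

variable {ι m n R : Type*}

theorem linearIndependent_of_pivots [Fintype ι] [Ring R] [NoZeroDivisors R]
    (v : ι → Matrix m n R) (p : ι → m) (q : ι → n) (hpiv : ∀ i, v i (p i) (q i) ≠ 0)
    (hoff : ∀ i j, j ≠ i → v j (p i) (q i) = 0) : LinearIndependent R v := by
  refine Fintype.linearIndependent_iff.2 fun g hg i => ?_
  have hentry := congr_fun (congr_fun hg (p i)) (q i)
  simp only [sum_apply, smul_apply, smul_eq_mul, zero_apply] at hentry
  rw [Finset.sum_eq_single i (fun j _ hj => by rw [hoff i j hj, mul_zero])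
    (fun h => absurd (Finset.mem_univ i) h)] at hentry
  exact (mul_eq_zero.1 hentry).resolve_right (hpiv i)

variable [Fintype m] [DecidableEq m] [Ring R]

theorem lie_single_of_col_eq_zero {A : Matrix m m R} {i k j : m} {a : R}
    (hcol : A.col i = 0) (hrow : A.row k = Pi.single j a) :
    ⁅A, single i k 1⁆ = single i j (-a) := by
  rw [Ring.lie_def, mul_single_eq_updateCol_zero, hcol, smul_zero, updateCol_zero_zero,
    single_mul_eq_updateRow_zero, hrow, one_smul, ← single_eq_updateRow_zero, zero_sub,
    single_neg]

theorem lie_single_single_of_ne {i j k : m} (hj : j ≠ i) (hk : k ≠ i) (a b : R) :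
    ⁅single i j a, single i k b⁆ = 0 := by
  simp [Ring.lie_def, hj, hk]

end Matrix

namespace Filiform

open Matrix

variable (n : ℕ)

def headMatrix : Matrix (Fin (n + 2)) (Fin (n + 2)) ℝ :=
  Matrix.of fun p q : Fin (n + 2) =>
    if (p : ℕ) = 1 ∧ (q : ℕ) = n + 1 then (-1 : ℝ)
    else if 2 ≤ (p : ℕ) ∧ (p : ℕ) ≤ n ∧ (q : ℕ) + 1 = (p : ℕ) then
      -((p : ℕ) : ℝ)
    else 0

def singleCol (i : Fin (n + 2)) : Fin (n + 2) :=
  ⟨if (i : ℕ) = n + 1 then n + 1 else n + 1 - i, by split_ifs <;> omega⟩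

def repMatrix (i : Fin (n + 2)) : Matrix (Fin (n + 2)) (Fin (n + 2)) ℝ :=
  if i = 0 then headMatrix n else single 0 (singleCol n i) 1

variable {n}

theorem singleCol_ne_zero (i : Fin (n + 2)) : singleCol n i ≠ 0 := by
  have := i.isLt
  simp only [singleCol, ne_eq, Fin.ext_iff, Fin.val_zero]
  split_ifs <;> first | trivial | omega

theorem eq_of_singleCol_eq {i j : Fin (n + 2)} (hi : i ≠ 0) (hj : j ≠ 0)
    (h : singleCol n i = singleCol n j) : i = j := by
  simp only [singleCol, ne_eq, Fin.ext_iff, Fin.val_zero] at hi hj h ⊢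
  split_ifs at h <;> omega

theorem headMatrix_col_zero : (headMatrix n).col 0 = 0 := by
  funext p
  simp only [col_apply, headMatrix, of_apply, Pi.zero_apply]
  split_ifs <;> grind

theorem headMatrix_row_zero : (headMatrix n).row 0 = 0 := by
  funext q
  simp [headMatrix]

theorem headMatrix_row_singleCol {i : Fin (n + 2)} (h1 : 1 ≤ (i : ℕ)) (h2 : (i : ℕ) ≤ n) :
    (headMatrix n).row (singleCol n i) =
      Pi.single (singleCol n ⟨i + 1, Nat.succ_lt_succ (Nat.lt_succ_of_le h2)⟩)
        (-((n + 1 - i : ℕ) : ℝ)) := by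
  funext q
  simp only [row_apply, headMatrix, singleCol, of_apply, Pi.single_apply, Fin.ext_iff]
  split_ifs <;> first | rfl | (exfalso; omega) |
    (rw [show n + 1 - (i : ℕ) = 1 by omega]; norm_num)

theorem headMatrix_row_singleCol_last (hn : 1 ≤ n) :
    (headMatrix n).row (singleCol n (Fin.last (n + 1))) = 0 := by
  funext q
  simp only [row_apply, headMatrix, singleCol, of_apply, Fin.val_last, Pi.zero_apply]
  split_ifs <;> first | rfl | (exfalso; omega)

theorem repMatrix_zero : repMatrix n 0 = headMatrix n := if_pos rfl

theorem repMatrix_of_ne_zero {i : Fin (n + 2)} (hi : i ≠ 0) :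
    repMatrix n i = single 0 (singleCol n i) 1 :=
  if_neg hi

theorem eq_repMatrix {E : Fin (n + 2) → Matrix (Fin (n + 2)) (Fin (n + 2)) ℝ}
    (hE0 : E 0 = headMatrix n)
    (hEmid : ∀ i : Fin (n + 2), 1 ≤ (i : ℕ) → (i : ℕ) ≤ n →
      E i = single 0 ⟨n + 1 - (i : ℕ), Nat.lt_succ_of_le (Nat.sub_le _ _)⟩ 1)
    (hElast : E (Fin.last (n + 1)) = single 0 (Fin.last (n + 1)) 1) : E = repMatrix n := by
  funext i
  by_cases hi : i = 0
  · rw [hi, hE0, repMatrix_zero]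
  rw [repMatrix_of_ne_zero hi]
  by_cases hil : i = Fin.last (n + 1)
  · rw [hil, hElast]
    exact congrArg (single 0 · 1) (Fin.ext (if_pos rfl).symm)
  · have hi' : (i : ℕ) ≠ n + 1 := Fin.val_ne_iff.2 hil
    rw [hEmid i (Fin.pos_iff_ne_zero.2 hi) (by omega)]
    exact congrArg (single 0 · 1) (Fin.ext (if_neg hi').symm)

theorem linearIndependent_repMatrix : LinearIndependent ℝ (repMatrix n) := by
  refine linearIndependent_of_pivots (repMatrix n) (fun i => if i = 0 then 1 else 0)
    (fun i => if i = 0 then Fin.last (n + 1) else singleCol n i) (fun i => ?_)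
    (fun i j hji => ?_)
  · by_cases hi : i = 0
    · subst hi; simp [repMatrix_zero, headMatrix]
    · simp [repMatrix_of_ne_zero hi, hi]
  · by_cases hi : i = 0
    · subst hi
      simp [repMatrix_of_ne_zero hji]
    · by_cases hj : j = 0
      · subst hj
        simp [repMatrix_zero, hi, ← row_apply, headMatrix_row_zero]
      · simpa [repMatrix_of_ne_zero hj, hi, single_apply] using
          fun h => hji (eq_of_singleCol_eq hj hi h)

theorem lie_repMatrix_zero_of_le {i : Fin (n + 2)} (h1 : 1 ≤ (i : ℕ)) (h2 : (i : ℕ) ≤ n) :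
    ⁅repMatrix n 0, repMatrix n i⁆ =
      ((n + 1 - (i : ℕ) : ℕ) : ℝ) •
        repMatrix n ⟨(i : ℕ) + 1, Nat.succ_lt_succ (Nat.lt_succ_of_le h2)⟩ := by
  rw [repMatrix_zero, repMatrix_of_ne_zero (Fin.pos_iff_ne_zero.1 h1),
    repMatrix_of_ne_zero (Fin.ne_of_val_ne (Nat.succ_ne_zero _)),
    lie_single_of_col_eq_zero headMatrix_col_zero (headMatrix_row_singleCol h1 h2), neg_neg,
    smul_single, smul_eq_mul, mul_one]

theorem lie_repMatrix_zero_last (hn : 1 ≤ n) :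
    ⁅repMatrix n 0, repMatrix n (Fin.last (n + 1))⁆ = 0 := by
  rw [repMatrix_zero, repMatrix_of_ne_zero Fin.last_pos.ne',
    lie_single_of_col_eq_zero (j := 0) headMatrix_col_zero
      (by rw [headMatrix_row_singleCol_last hn, Pi.single_zero]),
    neg_zero, single_zero]

theorem lie_repMatrix_of_ne_zero {i j : Fin (n + 2)} (hi : i ≠ 0) (hj : j ≠ 0) :
    ⁅repMatrix n i, repMatrix n j⁆ = 0 := by
  rw [repMatrix_of_ne_zero hi, repMatrix_of_ne_zero hj]
  exact lie_single_single_of_ne (singleCol_ne_zero i) (singleCol_ne_zero j) 1 1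

end Filiform

open Filiform in
/-- Indices are zero-based: `E i` and `e i` stand for `E_{i+1}` and `e_{i+1}`. -/
theorem stmt5
    (n : ℕ) (hn : 1 ≤ n)
    (L : Type) [LieRing L] [LieAlgebra ℝ L]
    (e : Fin (n + 2) → L)
    (hindep : LinearIndependent ℝ e)
    (hspan : Submodule.span ℝ (Set.range e) = ⊤)
    (hbr : ∀ j : Fin (n + 2), ∀ _h1 : 1 ≤ (j : ℕ), ∀ _h2 : (j : ℕ) ≤ n,
      ⁅e 0, e j⁆ = ((n + 1 - (j : ℕ) : ℕ) : ℝ) • e ⟨(j : ℕ) + 1, by omega⟩)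
    (hlast : ⁅e 0, e ⟨n + 1, by omega⟩⁆ = 0)
    (hzero : ∀ i j : Fin (n + 2), (i : ℕ) ≠ 0 → (j : ℕ) ≠ 0 → ⁅e i, e j⁆ = 0)
    (E : Fin (n + 2) → Matrix (Fin (n + 2)) (Fin (n + 2)) ℝ)
    (hE0 : E 0 = Matrix.of fun p q : Fin (n + 2) =>
      if (p : ℕ) = 1 ∧ (q : ℕ) = n + 1 then (-1 : ℝ)
      else if 2 ≤ (p : ℕ) ∧ (p : ℕ) ≤ n ∧ (q : ℕ) + 1 = (p : ℕ) then -((p : ℕ) : ℝ)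
      else 0)
    (hEmid : ∀ i : Fin (n + 2), ∀ _h1 : 1 ≤ (i : ℕ), ∀ _h2 : (i : ℕ) ≤ n,
      E i = Matrix.single 0 ⟨n + 1 - (i : ℕ), by omega⟩ (1 : ℝ))
    (hElast : E ⟨n + 1, by omega⟩ =
      Matrix.single 0 ⟨n + 1, by omega⟩ (1 : ℝ)) :
    LinearIndependent ℝ E ∧
      (∀ i : Fin (n + 2), ∀ _h1 : 1 ≤ (i : ℕ), ∀ _h2 : (i : ℕ) ≤ n,
        ⁅E 0, E i⁆ = ((n + 1 - (i : ℕ) : ℕ) : ℝ) • E ⟨(i : ℕ) + 1, by omega⟩) ∧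
      (∀ i j : Fin (n + 2), (i : ℕ) ≠ 0 → (j : ℕ) ≠ 0 → ⁅E i, E j⁆ = 0) ∧
      ∃ S : LieSubalgebra ℝ (Matrix (Fin (n + 2)) (Fin (n + 2)) ℝ),
        S.toSubmodule = Submodule.span ℝ (Set.range E) ∧
        Nonempty (L ≃ₗ⁅ℝ⁆ S) := by
  obtain rfl : E = repMatrix n := eq_repMatrix hE0 hEmid hElast
  let b := Module.Basis.mk hindep hspan.ge
  have hb : ∀ k, b k = e k := Module.Basis.mk_apply hindep hspan.ge
  have hφ : ∀ k, b.constr ℝ (repMatrix n) (e k) = repMatrix n k := fun k => by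
    rw [← hb, b.constr_basis]
  refine ⟨linearIndependent_repMatrix, fun i h1 h2 => lie_repMatrix_zero_of_le h1 h2,
    fun i j hi hj => lie_repMatrix_of_ne_zero (Fin.val_ne_iff.1 hi) (Fin.val_ne_iff.1 hj),
    b.exists_lieEquiv_lieSubalgebra_span linearIndependent_repMatrix fun i j hij => ?_⟩
  have hj : j ≠ 0 := (hij.trans_le' (Fin.zero_le i)).ne'
  rw [hb, hb]
  by_cases hi : i = 0
  · subst hi
    by_cases hjl : (j : ℕ) = n + 1
    · rw [show j = ⟨n + 1, by omega⟩ from Fin.ext hjl, hlast, map_zero]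
      exact (lie_repMatrix_zero_last hn).symm
    · have h1 : 1 ≤ (j : ℕ) := Fin.pos_iff_ne_zero.2 hj
      rw [hbr j h1 (by omega), map_smul, hφ, lie_repMatrix_zero_of_le h1 (by omega)]
  · rw [hzero i j (Fin.val_ne_iff.2 hi) (Fin.val_ne_iff.2 hj), map_zero,
      lie_repMatrix_of_ne_zero hi hj]
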